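/- arXiv:2407.16987 — 3 statements merged into one kernel-verified Lean document; each statement's English description precedes it below -/
import Mathlib

section
/- Any operator T on the space of bounded functions W : X → ℝ (sup norm) satisfying (i) monotonicity: W ≤ U pointwise implies TW ≤ TU pointwise, and (ii) discounting: there exists β ∈ (0,1) with T(W + a) ≤ TW + βa for every constant a ≥ 0, is a contraction with Lipschitz constant β (Blackwell's sufficient conditions). -/
/-! If `W ≤ U + C` pointwise, monotonicity gives `T W ≤ T (U + C)` and discounting gives
`T (U + C) ≤ T U + β C`; exchanging `W` and `U` bounds `|T W - T U|` by `β C`. -/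

lemma exists_abs_add_const_le {X : Type*} {U : X → ℝ} (hU : ∃ B, ∀ x, |U x| ≤ B) (a : ℝ) :
    ∃ B, ∀ x, |U x + a| ≤ B := by
  obtain ⟨B, hB⟩ := hU
  exact ⟨B + |a|, fun x => (abs_add_le _ _).trans (add_le_add_left (hB x) _)⟩

lemma sub_le_mul_of_monotone_of_discount {X : Type*}
    (T : (X → ℝ) → (X → ℝ)) (beta : ℝ)
    (hmono : ∀ W U : X → ℝ, (∃ B, ∀ x, |W x| ≤ B) → (∃ B, ∀ x, |U x| ≤ B) →
      (∀ x, W x ≤ U x) → ∀ x, T W x ≤ T U x)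
    (hdisc : ∀ (W : X → ℝ), (∃ B, ∀ x, |W x| ≤ B) → ∀ a : ℝ, 0 ≤ a →
      ∀ x, T (fun y => W y + a) x ≤ T W x + beta * a)
    {W U : X → ℝ} (hW : ∃ B, ∀ x, |W x| ≤ B) (hU : ∃ B, ∀ x, |U x| ≤ B)
    {C : ℝ} (hC : 0 ≤ C) (hWU : ∀ x, W x - U x ≤ C) (x : X) :
    T W x - T U x ≤ beta * C := by
  have hmono_shift : T W x ≤ T (fun y => U y + C) x :=
    hmono W _ hW (exists_abs_add_const_le hU C) (fun y => by linarith [hWU y]) x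
  linarith [hdisc U hU C hC x]

theorem blackwell_sufficient_conditions_general {X : Type*}
    (T : (X → ℝ) → (X → ℝ)) (beta : ℝ)
    (hmono : ∀ W U : X → ℝ, (∃ B, ∀ x, |W x| ≤ B) → (∃ B, ∀ x, |U x| ≤ B) →
      (∀ x, W x ≤ U x) → ∀ x, T W x ≤ T U x)
    (hdisc : ∀ (W : X → ℝ), (∃ B, ∀ x, |W x| ≤ B) → ∀ a : ℝ, 0 ≤ a →
      ∀ x, T (fun y => W y + a) x ≤ T W x + beta * a) :
    ∀ W U : X → ℝ, (∃ B, ∀ x, |W x| ≤ B) → (∃ B, ∀ x, |U x| ≤ B) →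
      ∀ C : ℝ, 0 ≤ C → (∀ x, |W x - U x| ≤ C) →
      ∀ x, |T W x - T U x| ≤ beta * C := by
  intro W U hW hU C hC hWU x
  rw [abs_sub_le_iff]
  exact ⟨sub_le_mul_of_monotone_of_discount T beta hmono hdisc hW hU hC
      (fun y => (abs_sub_le_iff.mp (hWU y)).1) x,
    sub_le_mul_of_monotone_of_discount T beta hmono hdisc hU hW hC
      (fun y => (abs_sub_le_iff.mp (hWU y)).2) x⟩

/-- Blackwell's sufficient conditions: an operator on bounded functions that is
monotone and satisfies discounting with factor `β ∈ (0,1)` is a contraction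
with Lipschitz constant `β` in the sup metric. -/
theorem blackwell_sufficient_conditions {X : Type*} [Nonempty X]
    (T : (X → ℝ) → (X → ℝ)) (beta : ℝ) (hbeta : beta ∈ Set.Ioo (0:ℝ) 1)
    (hmono : ∀ W U : X → ℝ, (∃ B, ∀ x, |W x| ≤ B) → (∃ B, ∀ x, |U x| ≤ B) →
      (∀ x, W x ≤ U x) → ∀ x, T W x ≤ T U x)
    (hdisc : ∀ (W : X → ℝ), (∃ B, ∀ x, |W x| ≤ B) → ∀ a : ℝ, 0 ≤ a →
      ∀ x, T (fun y => W y + a) x ≤ T W x + beta * a) :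
    ∀ W U : X → ℝ, (∃ B, ∀ x, |W x| ≤ B) → (∃ B, ∀ x, |U x| ≤ B) →
      ∀ C : ℝ, 0 ≤ C → (∀ x, |W x - U x| ≤ C) →
      ∀ x, |T W x - T U x| ≤ beta * C :=
  blackwell_sufficient_conditions_general T beta hmono hdisc
end

section
/- Suppose u : S × [0,Q̄] → ℝ, W : D → ℝ are bounded, u and W are non-increasing in s (for each fixed other argument), P : S → [0,1] is non-decreasing in s, and δ ∈ (0,1). Then (TW)(s,Q) = max{ sup_{q∈[0,Q]}[(1-P(s))(u(s,q)+δW(λs+q,Q)) + P(s)(u(s,Q)+δW(λs+Q,Q))], u_R(s)+δW(λs,Q) } is non-increasing in s whenever u_R is non-increasing in s. Key step: since q = Q is feasible, sup_{q∈[0,Q]}[u(s,q)+δW(λs+q,Q)] ≥ u(s,Q)+δW(λs+Q,Q), so shifting probability mass to the triggered term weakly lowers the value. -/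
/-!
With `f q = u s q + δ W(λs + q, Q)` the continuation value of consuming `q`, the first branch of
`T W` is `sup_{q ∈ [0,Q]} ((1 - p) f q + p f Q)` with `p = P s`. Raising `s` lowers `f` pointwise
(as `u`, `W` are non-increasing and the next state `λs + q` stays in `D`) and raises `p`; since
`q = Q` is feasible, the supremum dominates `f Q`, so moving weight onto the forced term `f Q`
cannot raise the value. The abstinence branch `u_R(s) + δ W(λs, Q)` is non-increasing directly.
-/

/-- The Bellman value-iteration operator of the cue-triggered addiction model. -/
noncomputable def bellmanT (lam delta : ℝ) (P : ℝ → ℝ) (u : ℝ → ℝ → ℝ)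
    (uR : ℝ → ℝ) (W : ℝ → ℝ → ℝ) (s Q : ℝ) : ℝ :=
  max
    (sSup {v : ℝ | ∃ q ∈ Set.Icc (0:ℝ) Q,
      v = (1 - P s) * (u s q + delta * W (lam * s + q) Q)
        + P s * (u s Q + delta * W (lam * s + Q) Q)})
    (uR s + delta * W (lam * s) Q)

open Set

/-- The branch of the Bellman operator in which, with probability `p`, the cue forces
consumption `Q`. -/
noncomputable def cueSup (p : ℝ) (f : ℝ → ℝ) (Q : ℝ) : ℝ :=
  sSup {v : ℝ | ∃ q ∈ Icc (0:ℝ) Q, v = (1 - p) * f q + p * f Q}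

section cueSup

variable {p p' Q : ℝ} {f g : ℝ → ℝ}

lemma bddAbove_cueSet (hp : p ∈ Icc (0:ℝ) 1) (hQ : 0 ≤ Q) (hf : BddAbove (f '' Icc 0 Q)) :
    BddAbove {v : ℝ | ∃ q ∈ Icc (0:ℝ) Q, v = (1 - p) * f q + p * f Q} := by
  obtain ⟨M, hM⟩ := hf
  refine ⟨M, ?_⟩
  rintro v ⟨q, hq, rfl⟩
  have hfq : f q ≤ M := hM (mem_image_of_mem f hq)
  have hfQ : f Q ≤ M := hM (mem_image_of_mem f ⟨hQ, le_rfl⟩)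
  nlinarith [hp.1, hp.2]

lemma mix_le_cueSup (hp : p ∈ Icc (0:ℝ) 1) (hQ : 0 ≤ Q) (hf : BddAbove (f '' Icc 0 Q))
    {q : ℝ} (hq : q ∈ Icc 0 Q) : (1 - p) * f q + p * f Q ≤ cueSup p f Q :=
  le_csSup (bddAbove_cueSet hp hQ hf) ⟨q, hq, rfl⟩

/-- Shifting weight onto the forced term does not raise the value: `q = Q` is feasible,
so the supremum already dominates `f Q`. -/
lemma mix_le_cueSup_of_le (hp : p ∈ Icc (0:ℝ) 1) (hpp' : p ≤ p') (hp' : p' ≤ 1)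
    (hQ : 0 ≤ Q) (hf : BddAbove (f '' Icc 0 Q)) {q : ℝ} (hq : q ∈ Icc 0 Q) :
    (1 - p') * f q + p' * f Q ≤ cueSup p f Q := by
  rcases le_total (f Q) (f q) with hQq | hqQ
  · calc (1 - p') * f q + p' * f Q ≤ (1 - p) * f q + p * f Q := by nlinarith
      _ ≤ cueSup p f Q := mix_le_cueSup hp hQ hf hq
  · calc (1 - p') * f q + p' * f Q ≤ (1 - p) * f Q + p * f Q := by nlinarith
      _ ≤ cueSup p f Q := mix_le_cueSup hp hQ hf ⟨hQ, le_rfl⟩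

lemma cueSup_le_cueSup (hp : p ∈ Icc (0:ℝ) 1) (hpp' : p ≤ p') (hp' : p' ≤ 1) (hQ : 0 ≤ Q)
    (hf : BddAbove (f '' Icc 0 Q)) (hgf : ∀ q ∈ Icc 0 Q, g q ≤ f q) :
    cueSup p' g Q ≤ cueSup p f Q := by
  refine csSup_le ⟨_, 0, ⟨le_rfl, hQ⟩, rfl⟩ ?_
  rintro v ⟨q, hq, rfl⟩
  have hg_le : (1 - p') * g q + p' * g Q ≤ (1 - p') * f q + p' * f Q := by
    have := hgf q hq
    have := hgf Q ⟨hQ, le_rfl⟩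
    nlinarith [hp.1.trans hpp']
  exact hg_le.trans (mix_le_cueSup_of_le hp hpp' hp' hQ hf hq)

end cueSup

/-- `D` is invariant under the transition `s ↦ λ s + q` for `q ∈ [0, Q]`. -/
lemma transition_le_of_le_div {lam s Q q : ℝ} (hlam₀ : 0 ≤ lam) (hlam₁ : lam < 1)
    (hs : s ≤ Q / (1 - lam)) (hq : q ≤ Q) : lam * s + q ≤ Q / (1 - lam) := by
  have h1lam : 0 < 1 - lam := by linarith
  rw [le_div_iff₀ h1lam] at hs ⊢
  nlinarith [mul_le_mul_of_nonneg_left hs hlam₀]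

/-- Value iteration preserves monotone-decreasingness in the addictive state:
if `u`, `uR`, `W` are non-increasing in `s` and `P` is non-decreasing in `s`,
then `TW` is non-increasing in `s` on `D`. -/
theorem bellman_preserves_antitone_in_s (lam delta Qbar : ℝ)
    (hlam : lam ∈ Set.Ioo (0:ℝ) 1) (hdelta : delta ∈ Set.Ioo (0:ℝ) 1)
    (P : ℝ → ℝ) (hP : ∀ s, P s ∈ Set.Icc (0:ℝ) 1)
    (hPmono : ∀ s s' : ℝ, 0 ≤ s → s ≤ s' → s' ≤ Qbar / (1 - lam) →
      P s ≤ P s')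
    (u : ℝ → ℝ → ℝ) (uR W : ℝ → ℝ → ℝ)
    (hu_bdd : ∃ B, ∀ s q, |u s q| ≤ B) (hW_bdd : ∃ B, ∀ s Q, |W s Q| ≤ B)
    (hu_mono : ∀ q, ∀ s s' : ℝ, 0 ≤ s → s ≤ s' → s' ≤ Qbar / (1 - lam) →
      u s' q ≤ u s q)
    (huR_mono : ∀ Q, ∀ s s' : ℝ, 0 ≤ s → s ≤ s' → s' ≤ Qbar / (1 - lam) →
      uR s' Q ≤ uR s Q)
    (hW_mono : ∀ Q, ∀ s s' : ℝ, 0 ≤ s → s ≤ s' → s' ≤ Qbar / (1 - lam) →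
      W s' Q ≤ W s Q) :
    ∀ Q ∈ Set.Icc (0:ℝ) Qbar, ∀ s s' : ℝ,
      0 ≤ s → s ≤ s' → s' ≤ Q / (1 - lam) →
      bellmanT lam delta P u (fun t => uR t Q) W s' Q
        ≤ bellmanT lam delta P u (fun t => uR t Q) W s Q := by
  intro Q ⟨hQ0, hQQbar⟩ s s' hs0 hss' hs'Q
  obtain ⟨Bu, hBu⟩ := hu_bdd
  obtain ⟨Bw, hBw⟩ := hW_bdd
  have hQ_Qbar : Q / (1 - lam) ≤ Qbar / (1 - lam) :=
    div_le_div_of_nonneg_right hQQbar (by linarith [hlam.2])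
  have hs'Qbar : s' ≤ Qbar / (1 - lam) := hs'Q.trans hQ_Qbar
  have hW_step : ∀ q ∈ Icc (0:ℝ) Q, W (lam * s' + q) Q ≤ W (lam * s + q) Q := fun q hq =>
    hW_mono Q _ _ (by nlinarith [hlam.1, hq.1]) (by nlinarith [hlam.1])
      ((transition_le_of_le_div hlam.1.le hlam.2 hs'Q hq.2).trans hQ_Qbar)
  have hcont_bdd : BddAbove ((fun q => u s q + delta * W (lam * s + q) Q) '' Icc 0 Q) := by
    refine ⟨Bu + delta * Bw, ?_⟩
    rintro _ ⟨q, -, rfl⟩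
    nlinarith [le_of_abs_le (hBu s q), le_of_abs_le (hBw (lam * s + q) Q), hdelta.1]
  have hcont_anti : ∀ q ∈ Icc (0:ℝ) Q,
      u s' q + delta * W (lam * s' + q) Q ≤ u s q + delta * W (lam * s + q) Q := fun q hq =>
    add_le_add (hu_mono q s s' hs0 hss' hs'Qbar)
      (mul_le_mul_of_nonneg_left (hW_step q hq) hdelta.1.le)
  have habstain : uR s' Q + delta * W (lam * s') Q ≤ uR s Q + delta * W (lam * s) Q := by
    simpa using add_le_add (huR_mono Q s s' hs0 hss' hs'Qbar)
      (mul_le_mul_of_nonneg_left (hW_step 0 ⟨le_rfl, hQ0⟩) hdelta.1.le)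
  exact max_le_max
    (cueSup_le_cueSup (hP s) (hPmono s s' hs0 hss' hs'Qbar) (hP s').2 hQ0 hcont_bdd hcont_anti)
    habstain
end

section
/- Let u : S × [0,Q̄] → ℝ with S = [0, Q̄/(1-λ)] compact, and suppose u(s,·) attains its maximum on [0,Q̄] at some q̄ and is non-increasing for q ≥ q̄, for all s. If W : D → ℝ is non-increasing in s and non-increasing in Q for Q ≥ q̄, then for q̄ ≤ Q < Q' (with (s,Q),(s,Q') ∈ D): sup_{q∈[0,Q]}[u(s,q)+δW(λs+q,Q)] ≥ sup_{q∈[0,Q']}[u(s,q)+δW(λs+q,Q')]. That is, widening the feasible interval beyond q̄ cannot increase the value, because any maximizer for limit Q' lies in [0,q̄] ⊆ [0,Q] and W is non-increasing in Q. -/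
/-!
Every choice `q ∈ [0, Q']` is dominated by the choice `min q Q ∈ [0, Q]`. For `q ≤ Q` only the
continuation value changes, and `W` is non-increasing in the limit beyond `q̄`. For `q > Q ≥ q̄`,
lowering `q` to `Q` raises `u(s, ·)`, which decreases past `q̄`, and raises the continuation value,
since the next stock `λ s + q` decreases. Because `sSup` of a set of reals unbounded above is `0`,
the comparison of suprema also needs the objective with limit `Q` to be bounded above, by
`u(s, q̄) + δ W(λ s, Q)`.
-/

open Set

theorem csSup_le_csSup_of_forall_exists_le {α : Type*} [ConditionallyCompleteLattice α]
    {s t : Set α} (hs : s.Nonempty) (ht : BddAbove t) (h : ∀ x ∈ s, ∃ y ∈ t, x ≤ y) :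
    sSup s ≤ sSup t :=
  csSup_le hs fun x hx ↦
    let ⟨_, hy, hxy⟩ := h x hx
    le_csSup_of_le ht hy hxy

/-- The transition `(s, Q) ↦ (λ s + q, Q)` with `q ≤ Q` stays in `D`. -/
theorem mul_add_le_div_one_sub {lam s q Q : ℝ} (hlam0 : 0 ≤ lam) (hlam1 : lam < 1)
    (hs : s ≤ Q / (1 - lam)) (hq : q ≤ Q) : lam * s + q ≤ Q / (1 - lam) := by
  have h1 : (0 : ℝ) < 1 - lam := by linarith
  calc lam * s + q ≤ lam * (Q / (1 - lam)) + Q := by gcongr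
    _ = Q / (1 - lam) := by field_simp; ring

section Objective

variable {v : ℝ → ℝ} {W : ℝ → ℝ → ℝ} {delta x qbar Qbar smax Q : ℝ}

theorem bddAbove_objective {c : ℝ} (hv : ∀ q ∈ Icc 0 Q, v q ≤ c)
    (hW_s : ∀ Q, ∀ s s' : ℝ, 0 ≤ s → s ≤ s' → s' ≤ smax → W s' Q ≤ W s Q)
    (hdelta : 0 ≤ delta) (hx : 0 ≤ x) (hxQ : x + Q ≤ smax) :
    BddAbove {r : ℝ | ∃ q ∈ Icc 0 Q, r = v q + delta * W (x + q) Q} := by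
  refine ⟨c + delta * W x Q, ?_⟩
  rintro _ ⟨q, hq, rfl⟩
  have hW : W (x + q) Q ≤ W x Q := hW_s Q x (x + q) hx (by linarith [hq.1]) (by linarith [hq.2])
  gcongr
  exact hv q hq

theorem exists_objective_ge_of_le_limit {Q' q : ℝ}
    (hv : ∀ q q' : ℝ, qbar ≤ q → q ≤ q' → q' ≤ Qbar → v q' ≤ v q)
    (hW_s : ∀ Q, ∀ s s' : ℝ, 0 ≤ s → s ≤ s' → s' ≤ smax → W s' Q ≤ W s Q)
    (hW_Q : ∀ s, ∀ Q Q' : ℝ, qbar ≤ Q → Q ≤ Q' → Q' ≤ Qbar → W s Q' ≤ W s Q)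
    (hdelta : 0 ≤ delta) (hx : 0 ≤ x) (hQ0 : 0 ≤ Q) (hQ : qbar ≤ Q) (hQQ' : Q ≤ Q')
    (hQ' : Q' ≤ Qbar) (hq : q ∈ Icc 0 Q') (hxq : x + q ≤ smax) :
    ∃ p ∈ Icc 0 Q, v q + delta * W (x + q) Q' ≤ v p + delta * W (x + p) Q := by
  rcases le_or_gt q Q with hqQ | hqQ
  · refine ⟨q, ⟨hq.1, hqQ⟩, ?_⟩
    gcongr
    exact hW_Q (x + q) Q Q' hQ hQQ' hQ'
  · refine ⟨Q, ⟨hQ0, le_rfl⟩, ?_⟩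
    have hvQ : v q ≤ v Q := hv Q q hQ hqQ.le (hq.2.trans hQ')
    have hW : W (x + q) Q' ≤ W (x + Q) Q :=
      (hW_s Q' (x + Q) (x + q) (by linarith) (by linarith) hxq).trans
        (hW_Q (x + Q) Q Q' hQ hQQ' hQ')
    gcongr

end Objective

theorem value_antitone_in_limit_general (lam delta Qbar qbar : ℝ)
    (hlam : lam ∈ Set.Ioo (0:ℝ) 1) (hdelta : delta ∈ Set.Ioo (0:ℝ) 1)
    (u : ℝ → ℝ → ℝ) (W : ℝ → ℝ → ℝ)
    (hu_max : ∀ s ∈ Set.Icc (0:ℝ) (Qbar / (1 - lam)),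
      ∀ q ∈ Set.Icc (0:ℝ) Qbar, u s q ≤ u s qbar)
    (hu_dec : ∀ s ∈ Set.Icc (0:ℝ) (Qbar / (1 - lam)),
      ∀ q q' : ℝ, qbar ≤ q → q ≤ q' → q' ≤ Qbar → u s q' ≤ u s q)
    (hW_s : ∀ Q, ∀ s s' : ℝ, 0 ≤ s → s ≤ s' → s' ≤ Qbar / (1 - lam) →
      W s' Q ≤ W s Q)
    (hW_Q : ∀ s, ∀ Q Q' : ℝ, qbar ≤ Q → Q ≤ Q' → Q' ≤ Qbar →
      W s Q' ≤ W s Q)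
    (s Q Q' : ℝ) (hQ : qbar ≤ Q) (hQQ' : Q < Q')
    (hmemQ : 0 ≤ Q ∧ Q ≤ Qbar ∧ 0 ≤ s ∧ s ≤ Q / (1 - lam))
    (hmemQ' : 0 ≤ Q' ∧ Q' ≤ Qbar ∧ 0 ≤ s ∧ s ≤ Q' / (1 - lam)) :
    sSup {v : ℝ | ∃ q ∈ Set.Icc (0:ℝ) Q', v = u s q + delta * W (lam * s + q) Q'}
      ≤ sSup {v : ℝ | ∃ q ∈ Set.Icc (0:ℝ) Q, v = u s q + delta * W (lam * s + q) Q} := by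
  obtain ⟨hlam0, hlam1⟩ := hlam
  obtain ⟨hQ0, hQb, hs0, -⟩ := hmemQ
  obtain ⟨hQ'0, hQ'b, -, hsQ'⟩ := hmemQ'
  have hQ'S : Q' / (1 - lam) ≤ Qbar / (1 - lam) := by gcongr
  have hsS : s ∈ Icc 0 (Qbar / (1 - lam)) := ⟨hs0, hsQ'.trans hQ'S⟩
  have hx : 0 ≤ lam * s := by positivity
  have hnext : ∀ q ≤ Q', lam * s + q ≤ Qbar / (1 - lam) := fun q hq ↦
    (mul_add_le_div_one_sub hlam0.le hlam1 hsQ' hq).trans hQ'S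
  refine csSup_le_csSup_of_forall_exists_le ⟨_, 0, ⟨le_rfl, hQ'0⟩, rfl⟩
    (bddAbove_objective (fun q hq ↦ hu_max s hsS q ⟨hq.1, hq.2.trans hQb⟩) hW_s hdelta.1.le hx
      (hnext Q hQQ'.le)) ?_
  rintro _ ⟨q, hq, rfl⟩
  obtain ⟨p, hp, hle⟩ := exists_objective_ge_of_le_limit (hu_dec s hsS) hW_s hW_Q hdelta.1.le hx
    hQ0 hQ hQQ'.le hQ'b hq (hnext q hq.2)
  exact ⟨_, ⟨p, hp, rfl⟩, hle⟩

/-- Widening the feasible interval beyond `q̄` cannot increase the value: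
if `u(s,·)` attains its maximum at `q̄` and is non-increasing beyond `q̄`, and
`W` is non-increasing in `s` and non-increasing in `Q` for `Q ≥ q̄`, then for
`q̄ ≤ Q < Q'` the maximized objective with limit `Q` dominates that with
limit `Q'`. -/
theorem value_antitone_in_limit (lam delta Qbar qbar : ℝ)
    (hlam : lam ∈ Set.Ioo (0:ℝ) 1) (hdelta : delta ∈ Set.Ioo (0:ℝ) 1)
    (hqbar : qbar ∈ Set.Icc (0:ℝ) Qbar)
    (u : ℝ → ℝ → ℝ) (W : ℝ → ℝ → ℝ)
    (hu_max : ∀ s ∈ Set.Icc (0:ℝ) (Qbar / (1 - lam)),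
      ∀ q ∈ Set.Icc (0:ℝ) Qbar, u s q ≤ u s qbar)
    (hu_dec : ∀ s ∈ Set.Icc (0:ℝ) (Qbar / (1 - lam)),
      ∀ q q' : ℝ, qbar ≤ q → q ≤ q' → q' ≤ Qbar → u s q' ≤ u s q)
    (hW_s : ∀ Q, ∀ s s' : ℝ, 0 ≤ s → s ≤ s' → s' ≤ Qbar / (1 - lam) →
      W s' Q ≤ W s Q)
    (hW_Q : ∀ s, ∀ Q Q' : ℝ, qbar ≤ Q → Q ≤ Q' → Q' ≤ Qbar →
      W s Q' ≤ W s Q)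
    (s Q Q' : ℝ) (hQ : qbar ≤ Q) (hQQ' : Q < Q')
    (hmemQ : 0 ≤ Q ∧ Q ≤ Qbar ∧ 0 ≤ s ∧ s ≤ Q / (1 - lam))
    (hmemQ' : 0 ≤ Q' ∧ Q' ≤ Qbar ∧ 0 ≤ s ∧ s ≤ Q' / (1 - lam)) :
    sSup {v : ℝ | ∃ q ∈ Set.Icc (0:ℝ) Q', v = u s q + delta * W (lam * s + q) Q'}
      ≤ sSup {v : ℝ | ∃ q ∈ Set.Icc (0:ℝ) Q, v = u s q + delta * W (lam * s + q) Q} :=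
  value_antitone_in_limit_general lam delta Qbar qbar hlam hdelta u W hu_max hu_dec hW_s hW_Q s Q Q'
    hQ hQQ' hmemQ hmemQ'
end
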